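/- Let (N,M0) be a three-level PT-net system with T = L ∪ D ∪ H and fix a downgrading transition d ∈ D. Construct the net system N_d as follows: N_d has all places of N plus two fresh places p_d and p_d'; its initial marking extends M0 by one token on p_d and none on p_d'; every transition t of N keeps its flow and additionally has F(p_d,t) = F(t,p_d) = 1; there is a new transition d' with the same flow as d except F(d',p_d) = 0 and F(d',p_d') = 1; and for each transition t ∈ L ∪ H there is a fresh copy t' with the same flow as t except that its side-condition loop is on p_d' instead of p_d (F(p_d',t') = F(t',p_d') = 1 and F(p_d,t') = F(t',p_d) = 0). In N_d, all transitions are observable (low-level) except those in H' = { t' | t ∈ H }, which are unobservable. Then (N\D, M) and (N\(H ∪ D), M) are language equivalent (with observable transitions L) for every marking M such that M0[υd⟩M in N for some υ ∈ T*, if and only if N_d and N_d\H' are language equivalent. -/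

import Mathlib

/-! ## Labelled transition systems -/

structure LTS (Q : Type _) (A : Type _) where
  init : Q
  tr : Q → A → Q → Prop

namespace LTS

variable {Q Q' A : Type _}

/-- One unobservable step. -/
def TauStep (S : LTS Q A) (Obs : Set A) (q q' : Q) : Prop :=
  ∃ τ, τ ∉ Obs ∧ S.tr q τ q'

/-- `q →* q'` : reflexive-transitive closure of unobservable steps. -/
def TauStar (S : LTS Q A) (Obs : Set A) : Q → Q → Prop :=
  Relation.ReflTransGen (S.TauStep Obs)

/-- Weak steps producing a word of observable labels. -/
inductive WeakSteps (S : LTS Q A) (Obs : Set A) : Q → List A → Q → Prop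
  | nil (q : Q) : WeakSteps S Obs q [] q
  | tau {q q' q'' : Q} {w : List A} {τ : A} :
      τ ∉ Obs → S.tr q τ q' → WeakSteps S Obs q' w q'' → WeakSteps S Obs q w q''
  | obs {q q' q'' : Q} {w : List A} {σ : A} :
      σ ∈ Obs → S.tr q σ q' → WeakSteps S Obs q' w q'' → WeakSteps S Obs q (σ :: w) q''

/-- The language of a partially observed LTS. -/
def lang (S : LTS Q A) (Obs : Set A) : Set (List A) :=
  { w | ∃ q, S.WeakSteps Obs S.init w q }

end LTS

/-- `R` is a weak simulation of `S` by `S'`. -/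
def IsWeakSimulation {Q Q' A : Type _} (Obs : Set A) (S : LTS Q A) (S' : LTS Q' A)
    (R : Q → Q' → Prop) : Prop :=
  R S.init S'.init ∧
  ∀ q1 q1', R q1 q1' →
    (∀ σ ∈ Obs, ∀ q2, S.tr q1 σ q2 →
      ∃ q1'' q2'' q2', S'.TauStar Obs q1' q1'' ∧ S'.tr q1'' σ q2'' ∧
        S'.TauStar Obs q2'' q2' ∧ R q2 q2') ∧
    (∀ τ ∉ Obs, ∀ q2, S.tr q1 τ q2 →
      ∃ q2', S'.TauStar Obs q1' q2' ∧ R q2 q2')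

/-- `S` is weakly simulated by `S'`. -/
def WeaklySimulated {Q Q' A : Type _} (Obs : Set A) (S : LTS Q A) (S' : LTS Q' A) : Prop :=
  ∃ R, IsWeakSimulation Obs S S' R

/-- `R` is a weak bisimulation between `S` and `S'`. -/
def IsWeakBisimulation {Q Q' A : Type _} (Obs : Set A) (S : LTS Q A) (S' : LTS Q' A)
    (R : Q → Q' → Prop) : Prop :=
  IsWeakSimulation Obs S S' R ∧ IsWeakSimulation Obs S' S (fun q' q => R q q')

/-- `S` and `S'` are weakly bisimilar. -/
def WeaklyBisimilar {Q Q' A : Type _} (Obs : Set A) (S : LTS Q A) (S' : LTS Q' A) : Prop :=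
  ∃ R, IsWeakBisimulation Obs S S' R

/-! ## Place/Transition Petri nets -/

/-- A PT-net over a universe `P` of places and `Tr` of transitions:
a finite set of places, a finite set of transitions, and input/output flows.
Flows of non-transitions vanish. -/
structure PTNet (P : Type _) (Tr : Type _) where
  places : Finset P
  transitions : Finset Tr
  pre : Tr → P → ℕ
  post : Tr → P → ℕ
  pre_eq_zero : ∀ t ∉ transitions, ∀ p, pre t p = 0
  post_eq_zero : ∀ t ∉ transitions, ∀ p, post t p = 0

namespace PTNet

variable {P Tr : Type _} [DecidableEq P] [DecidableEq Tr]

/-- `M[t⟩` : transition `t` is enabled at marking `M`. -/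
def Enabled (N : PTNet P Tr) (M : P → ℕ) (t : Tr) : Prop :=
  t ∈ N.transitions ∧ ∀ p ∈ N.places, N.pre t p ≤ M p

/-- The marking obtained by firing `t` at `M`. -/
def fire (N : PTNet P Tr) (M : P → ℕ) (t : Tr) : P → ℕ :=
  fun p => if p ∈ N.places then M p + N.post t p - N.pre t p else M p

/-- `M[t⟩M'`. -/
def Fires (N : PTNet P Tr) (M : P → ℕ) (t : Tr) (M' : P → ℕ) : Prop :=
  N.Enabled M t ∧ M' = N.fire M t

/-- `M[s⟩M'` for a sequence `s` of transitions. -/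
def FiresSeq (N : PTNet P Tr) : (P → ℕ) → List Tr → (P → ℕ) → Prop
  | M, [], M' => M' = M
  | M, t :: s, M' => ∃ M'', N.Fires M t M'' ∧ N.FiresSeq M'' s M'

/-- `M'` is reachable from `M`. -/
def Reachable (N : PTNet P Tr) (M M' : P → ℕ) : Prop :=
  ∃ s, N.FiresSeq M s M'

/-- The restriction `N \ T'` of a net: the transitions in `T'` are removed. -/
def restrict (N : PTNet P Tr) (T' : Finset Tr) : PTNet P Tr where
  places := N.places
  transitions := N.transitions \ T'
  pre := fun t p => if t ∈ N.transitions \ T' then N.pre t p else 0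
  post := fun t p => if t ∈ N.transitions \ T' then N.post t p else 0
  pre_eq_zero := by intro t ht p; simp [ht]
  post_eq_zero := by intro t ht p; simp [ht]

/-- The composition `N1 | N2` of two nets (intended for disjoint place sets);
shared transitions synchronize. -/
def comp (N1 N2 : PTNet P Tr) : PTNet P Tr where
  places := N1.places ∪ N2.places
  transitions := N1.transitions ∪ N2.transitions
  pre := fun t p => if p ∈ N1.places then N1.pre t p else N2.pre t p
  post := fun t p => if p ∈ N1.places then N1.post t p else N2.post t p
  pre_eq_zero := by
    intro t ht p
    simp only [Finset.mem_union, not_or] at ht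
    by_cases hp : p ∈ N1.places <;>
      simp [hp, N1.pre_eq_zero t ht.1, N2.pre_eq_zero t ht.2]
  post_eq_zero := by
    intro t ht p
    simp only [Finset.mem_union, not_or] at ht
    by_cases hp : p ∈ N1.places <;>
      simp [hp, N1.post_eq_zero t ht.1, N2.post_eq_zero t ht.2]

/-- The union of two initial markings (agrees with `M1` on the places of `N1`,
with `M2` elsewhere). -/
def combine (N1 : PTNet P Tr) (M1 M2 : P → ℕ) : P → ℕ :=
  fun p => if p ∈ N1.places then M1 p else M2 p

/-- The reachability graph of a marked net, as an LTS on markings. -/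
def toLTS (N : PTNet P Tr) (M0 : P → ℕ) : LTS (P → ℕ) Tr where
  init := M0
  tr := fun M t M' => N.Fires M t M'

/-- The language of the net system `(N, M0)` whose observable transitions are
those in `L` (labelled by themselves): projections of firing sequences onto `L*`. -/
def lang (N : PTNet P Tr) (M0 : P → ℕ) (L : Finset Tr) : Set (List Tr) :=
  { w | ∃ s M, N.FiresSeq M0 s M ∧ s.filter (· ∈ L) = w }

/-- The free language of the net system `(N, M0)`: all of its firing sequences. -/
def freeLang (N : PTNet P Tr) (M0 : P → ℕ) : Set (List Tr) :=
  { s | ∃ M, N.FiresSeq M0 s M }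

/-- The net with given places and transitions and empty flow. -/
def ofSets (Pl : Finset P) (Ts : Finset Tr) : PTNet P Tr where
  places := Pl
  transitions := Ts
  pre := fun _ _ => 0
  post := fun _ _ => 0
  pre_eq_zero := fun _ _ _ => rfl
  post_eq_zero := fun _ _ _ => rfl

end PTNet

/-! ## Non-interference properties -/

section Security

variable {P Tr : Type _} [DecidableEq P] [DecidableEq Tr]

/-- Non-Deducibility on Compositions: for every high-level net system `N'`
(with any initial marking `M0'`) whose places are disjoint from those of `N` and
whose transitions avoid `L`, the systems `N \ H` and `(N | N') \ (H \ H')` are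
language equivalent, the observable transitions being those in `L`. -/
def NDC (N : PTNet P Tr) (M0 : P → ℕ) (L H : Finset Tr) : Prop :=
  ∀ (N' : PTNet P Tr) (M0' : P → ℕ),
    Disjoint N.places N'.places → Disjoint N'.transitions L →
    (N.restrict H).lang M0 L =
      ((N.comp N').restrict (H \ N'.transitions)).lang (N.combine M0 M0') L

/-- Bisimulation-based Non-Deducibility on Compositions: as `NDC`, but with
weak bisimilarity in place of language equivalence. -/
def BNDC (N : PTNet P Tr) (M0 : P → ℕ) (L H : Finset Tr) : Prop :=
  ∀ (N' : PTNet P Tr) (M0' : P → ℕ),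
    Disjoint N.places N'.places → Disjoint N'.transitions L →
    WeaklyBisimilar (L : Set Tr) ((N.restrict H).toLTS M0)
      (((N.comp N').restrict (H \ N'.transitions)).toLTS (N.combine M0 M0'))

/-- Strong BNDC: whenever a reachable marking `M1` enables a high transition `h`
with `M1[h⟩M2`, the systems `(N \ H, M1)` and `(N \ H, M2)` are weakly bisimilar. -/
def SBNDC (N : PTNet P Tr) (M0 : P → ℕ) (L H : Finset Tr) : Prop :=
  ∀ M1 h M2, N.Reachable M0 M1 → h ∈ H → N.Fires M1 h M2 →
    WeaklyBisimilar (L : Set Tr) ((N.restrict H).toLTS M1) ((N.restrict H).toLTS M2)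

/-- The least relation generated from `M0 R M0` by:
(i) if `M1 R M2` and `M2[h⟩M2'` with `h ∈ H` then `M1 R M2'`;
(ii) if `M1 R M2`, `M1[l⟩M1'` (in `N \ H`) and `M2[l⟩M2'` with `l ∈ L`
then `M1' R M2'`. -/
inductive RRel (N : PTNet P Tr) (M0 : P → ℕ) (L H : Finset Tr) : (P → ℕ) → (P → ℕ) → Prop
  | base : RRel N M0 L H M0 M0
  | high {M1 M2 M2' : P → ℕ} {h : Tr} : h ∈ H → RRel N M0 L H M1 M2 →
      N.Fires M2 h M2' → RRel N M0 L H M1 M2'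
  | low {M1 M2 M1' M2' : P → ℕ} {l : Tr} : l ∈ L → RRel N M0 L H M1 M2 →
      (N.restrict H).Fires M1 l M1' → N.Fires M2 l M2' → RRel N M0 L H M1' M2'

/-- The property `P(h,l)`: for all `w ∈ (L ∪ H)*` and `s ∈ L*`, if `M0[w⟩M1`,
`M1[h⟩M2`, `M1[s⟩M3` and `M2[s⟩M4`, then `M3[l⟩` iff `M4[l⟩`. -/
def PropP (N : PTNet P Tr) (M0 : P → ℕ) (L H : Finset Tr) (h l : Tr) : Prop :=
  ∀ (w s : List Tr) (M1 M2 M3 M4 : P → ℕ),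
    (∀ t ∈ w, t ∈ L ∪ H) → (∀ t ∈ s, t ∈ L) →
    N.FiresSeq M0 w M1 → N.Fires M1 h M2 →
    N.FiresSeq M1 s M3 → N.FiresSeq M2 s M4 →
    (N.Enabled M3 l ↔ N.Enabled M4 l)

/-- Intransitive Non-Interference for a three-level net system:
`(N \ D, M)` has NDC (w.r.t. low `L`, high `H`) for `M = M0` and for every
marking `M` with `M0[υd⟩M` in `N`, `d ∈ D`. -/
def INI (N : PTNet P Tr) (M0 : P → ℕ) (L D H : Finset Tr) : Prop :=
  NDC (N.restrict D) M0 L H ∧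
  ∀ (υ : List Tr) (d : Tr) (M : P → ℕ), d ∈ D → N.FiresSeq M0 (υ ++ [d]) M →
    NDC (N.restrict D) M L H

/-- Bisimulation-based Intransitive Non-Interference: as `INI` with `BNDC`. -/
def BINI (N : PTNet P Tr) (M0 : P → ℕ) (L D H : Finset Tr) : Prop :=
  BNDC (N.restrict D) M0 L H ∧
  ∀ (υ : List Tr) (d : Tr) (M : P → ℕ), d ∈ D → N.FiresSeq M0 (υ ++ [d]) M →
    BNDC (N.restrict D) M L H

/-- The property `Q(h,l)`: for all `χ ∈ T*` and `s ∈ L*`, if `M0[χ⟩M1`,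
`M1[h⟩M2`, `M1[s⟩M3` and `M2[s⟩M4`, then `M3[l⟩` iff `M4[l⟩`. -/
def PropQ (N : PTNet P Tr) (M0 : P → ℕ) (L : Finset Tr) (h l : Tr) : Prop :=
  ∀ (χ s : List Tr) (M1 M2 M3 M4 : P → ℕ),
    (∀ t ∈ χ, t ∈ N.transitions) → (∀ t ∈ s, t ∈ L) →
    N.FiresSeq M0 χ M1 → N.Fires M1 h M2 →
    N.FiresSeq M1 s M3 → N.FiresSeq M2 s M4 →
    (N.Enabled M3 l ↔ N.Enabled M4 l)

end Security

/-! The construction of the net `N_d`: places of `N` plus `p_d = Sum.inr true`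
and `p_d' = Sum.inr false`; transitions `Sum.inl t` for `t ∈ T` (with an extra
side-condition loop on `p_d`), the fresh copy `t' = Sum.inr (Sum.inl t)` for
`t ∈ L ∪ H` (with the side-condition loop on `p_d'` instead of `p_d`), and
`d' = Sum.inr (Sum.inr ())` (with the same flow as `d` except that it produces
on `p_d'` instead of returning the token to `p_d`). -/

namespace Gadget16

variable {P Tr : Type _} [DecidableEq P] [DecidableEq Tr]

def net (N : PTNet P Tr) (L H : Finset Tr) (d : Tr) :
    PTNet (P ⊕ Bool) (Tr ⊕ Tr ⊕ Unit) where
  places := N.places.image Sum.inl ∪ {Sum.inr true, Sum.inr false}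
  transitions :=
    N.transitions.image Sum.inl ∪
      (L ∪ H).image (fun t => Sum.inr (Sum.inl t)) ∪ {Sum.inr (Sum.inr ())}
  pre :=
    Sum.elim
      (fun t =>
        if t ∈ N.transitions then
          Sum.elim (fun p => N.pre t p) (fun b => if b then 1 else 0)
        else fun _ => 0)
      (Sum.elim
        (fun u =>
          if u ∈ L ∪ H then
            Sum.elim (fun p => N.pre u p) (fun b => if b then 0 else 1)
          else fun _ => 0)
        (fun _ => Sum.elim (fun p => N.pre d p) (fun b => if b then 1 else 0)))
  post :=
    Sum.elim
      (fun t =>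
        if t ∈ N.transitions then
          Sum.elim (fun p => N.post t p) (fun b => if b then 1 else 0)
        else fun _ => 0)
      (Sum.elim
        (fun u =>
          if u ∈ L ∪ H then
            Sum.elim (fun p => N.post u p) (fun b => if b then 0 else 1)
          else fun _ => 0)
        (fun _ => Sum.elim (fun p => N.post d p) (fun b => if b then 0 else 1)))
  pre_eq_zero := by
    intro t ht q
    rcases t with u | u | u
    · have hu : u ∉ N.transitions := fun hc =>
        ht (Finset.mem_union_left _
          (Finset.mem_union_left _ (Finset.mem_image_of_mem _ hc)))
      simp [hu]
    · have hu : u ∉ L ∪ H := fun hc =>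
        ht (Finset.mem_union_left _
          (Finset.mem_union_right _ (Finset.mem_image_of_mem _ hc)))
      simp only [Sum.elim_inr, Sum.elim_inl]; rw [if_neg hu]
    · exact absurd (Finset.mem_union_right _ (by simp)) ht
  post_eq_zero := by
    intro t ht q
    rcases t with u | u | u
    · have hu : u ∉ N.transitions := fun hc =>
        ht (Finset.mem_union_left _
          (Finset.mem_union_left _ (Finset.mem_image_of_mem _ hc)))
      simp [hu]
    · have hu : u ∉ L ∪ H := fun hc =>
        ht (Finset.mem_union_left _
          (Finset.mem_union_right _ (Finset.mem_image_of_mem _ hc)))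
      simp only [Sum.elim_inr, Sum.elim_inl]; rw [if_neg hu]
    · exact absurd (Finset.mem_union_right _ (by simp)) ht

/-- The initial marking of `N_d`: `M0` on the places of `N`, one token on
`p_d` and none on `p_d'`. -/
def init (M0 : P → ℕ) : P ⊕ Bool → ℕ :=
  Sum.elim M0 (fun b => if b then 1 else 0)

/-- The unobservable transitions of `N_d`: the copies `t'` of `t ∈ H`. -/
def highCopies (H : Finset Tr) : Finset (Tr ⊕ Tr ⊕ Unit) :=
  H.image (fun t => Sum.inr (Sum.inl t))

end Gadget16

/-!
The places `p_d`, `p_d'` of `N_d` carry a single token that acts as a mode switch. While it lies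
on `p_d`, exactly the transitions of `N` can fire, with their usual effect; `d'` fires exactly
when `d` can, with the same effect on the places of `N`, and moves the token to `p_d'`, after which
exactly the copies `t'` of `t ∈ L ∪ H` can fire, again with the effect of `t`. So the runs of `N_d`
are the runs of `N` together with the runs `υ d' ρ'` where `M0[υd⟩M` and `ρ` is a run of `N \ D`
from `M`; in `N_d \ H'` the run `ρ` ranges over the runs of `N \ (H ∪ D)` instead. Since `d'` and
the transitions of `N` are observable, an observed word of `N_d` determines `υ`, hence `M`, and so
the two languages of `N_d` agree iff, for each such `M`, the `L`-projections of the runs of `N \ D`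
and of `N \ (H ∪ D)` from `M` agree.
-/

namespace PTNet

section

variable {P Tr : Type _} [DecidableEq P] {N : PTNet P Tr}

theorem FiresSeq.mem_transitions :
    ∀ {M M' : P → ℕ} {s : List Tr}, N.FiresSeq M s M' → ∀ t ∈ s, t ∈ N.transitions
  | _, _, [], _ => by simp
  | _, _, _ :: _, ⟨_, hf, hs⟩ => by
    simpa only [List.forall_mem_cons] using ⟨hf.1.1, hs.mem_transitions⟩

theorem FiresSeq.right_unique :
    ∀ {M M₁ M₂ : P → ℕ} {s : List Tr}, N.FiresSeq M s M₁ → N.FiresSeq M s M₂ → M₁ = M₂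
  | _, _, _, [], h₁, h₂ => h₁.trans h₂.symm
  | _, _, _, _ :: _, ⟨_, hf₁, hs₁⟩, ⟨_, hf₂, hs₂⟩ => by
    rw [hf₁.2] at hs₁
    rw [hf₂.2] at hs₂
    exact hs₁.right_unique hs₂

theorem firesSeq_cons_iff {M M' : P → ℕ} {t : Tr} {s : List Tr} :
    N.FiresSeq M (t :: s) M' ↔ ∃ M'', N.Fires M t M'' ∧ N.FiresSeq M'' s M' :=
  Iff.rfl

end

theorem restrict_empty {P Tr : Type _} [DecidableEq Tr] (N : PTNet P Tr) :
    N.restrict ∅ = N := by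
  obtain ⟨places, transitions, pre, post, hpre, hpost⟩ := N
  simp only [restrict, Finset.sdiff_empty, mk.injEq, true_and]
  constructor <;> funext t p <;> split_ifs with ht
  exacts [rfl, (hpre t ht p).symm, rfl, (hpost t ht p).symm]

variable {P Tr : Type _} [DecidableEq P] [DecidableEq Tr] {N : PTNet P Tr}

theorem restrict_fires_iff {A : Finset Tr} {M M' : P → ℕ} {t : Tr} :
    (N.restrict A).Fires M t M' ↔ N.Fires M t M' ∧ t ∉ A := by
  by_cases ht : t ∈ N.transitions \ A
  · have hpre : (N.restrict A).pre t = N.pre t := funext fun _ => if_pos ht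
    have hpost : (N.restrict A).post t = N.post t := funext fun _ => if_pos ht
    have hfire : (N.restrict A).fire M t = N.fire M t := by
      unfold fire
      rw [hpre, hpost]
      rfl
    rw [Finset.mem_sdiff] at ht
    simp only [Fires, Enabled, hfire, hpre]
    simp [restrict, ht]
  · rw [Finset.mem_sdiff, not_and_not_right] at ht
    simp only [Fires, Enabled, restrict, Finset.mem_sdiff]
    tauto

theorem restrict_firesSeq_iff {A : Finset Tr} {s : List Tr} :
    ∀ {M M' : P → ℕ}, (N.restrict A).FiresSeq M s M' ↔ N.FiresSeq M s M' ∧ ∀ t ∈ s, t ∉ A := by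
  induction s with
  | nil => simp [FiresSeq]
  | cons t s ih =>
    simp only [firesSeq_cons_iff, restrict_fires_iff, ih, List.forall_mem_cons]
    grind

theorem restrict_union_firesSeq_iff {L D H X : Finset Tr} (hT : N.transitions = L ∪ D ∪ H)
    (hLD : Disjoint L D) (hDH : Disjoint D H) {M M' : P → ℕ} {s : List Tr} :
    (N.restrict (X ∪ D)).FiresSeq M s M' ↔
      N.FiresSeq M s M' ∧ ∀ u ∈ s, u ∈ L ∪ H ∧ u ∉ X := by
  rw [restrict_firesSeq_iff]
  refine and_congr_right fun hs => forall₂_congr fun u hu => ?_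
  have := hT ▸ hs.mem_transitions u hu
  have := Finset.disjoint_left.mp hLD
  have := Finset.disjoint_left.mp hDH
  simp only [Finset.mem_union] at *
  grind

end PTNet

namespace Gadget16

open PTNet

abbrev prime {Tr : Type _} (u : Tr) : Tr ⊕ Tr ⊕ Unit := Sum.inr (Sum.inl u)

abbrev dPrime {Tr : Type _} : Tr ⊕ Tr ⊕ Unit := Sum.inr (Sum.inr ())

def downgraded {P : Type _} (M : P → ℕ) : P ⊕ Bool → ℕ :=
  Sum.elim M (fun b => if b then 0 else 1)

theorem prime_injective {Tr : Type _} : Function.Injective (prime : Tr → Tr ⊕ Tr ⊕ Unit) :=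
  fun _ _ h => by simpa using h

theorem map_inl_append_dPrime_inj {Tr : Type _} :
    ∀ {χ υ : List Tr} {x y : List (Tr ⊕ Tr ⊕ Unit)},
      χ.map Sum.inl ++ dPrime :: x = υ.map Sum.inl ++ dPrime :: y → χ = υ ∧ x = y
  | [], [], _, _, h => by simpa using h
  | [], _ :: _, _, _, h | _ :: _, [], _, _, h => by simp at h
  | _ :: _, _ :: _, _, _, h => by
    simp only [List.map_cons, List.cons_append, List.cons.injEq, Sum.inl.injEq] at h
    obtain ⟨rfl, h⟩ := h
    obtain ⟨rfl, rfl⟩ := map_inl_append_dPrime_inj h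
    exact ⟨rfl, rfl⟩

theorem highCopies_empty {Tr : Type _} [DecidableEq Tr] :
    highCopies (∅ : Finset Tr) = ∅ :=
  Finset.image_empty _

variable {P Tr : Type _} [DecidableEq P] {N : PTNet P Tr} {d : Tr}

def spliceLang (N : PTNet P Tr) (M0 : P → ℕ) (d : Tr) (K : (P → ℕ) → Set (List Tr)) :
    Set (List (Tr ⊕ Tr ⊕ Unit)) :=
  {w | ∃ χ ∈ N.freeLang M0, χ.map Sum.inl = w} ∪
    {w | ∃ χ M, N.FiresSeq M0 (χ ++ [d]) M ∧
      ∃ v ∈ K M, χ.map Sum.inl ++ dPrime :: v.map prime = w}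

theorem spliceLang_subset_spliceLang_iff {M0 : P → ℕ} {K₁ K₂ : (P → ℕ) → Set (List Tr)} :
    spliceLang N M0 d K₁ ⊆ spliceLang N M0 d K₂ ↔
      ∀ υ M, N.FiresSeq M0 (υ ++ [d]) M → K₁ M ⊆ K₂ M := by
  constructor
  · intro h υ M hυ v hv
    rcases h (Or.inr ⟨υ, M, hυ, v, hv, rfl⟩) with ⟨χ, -, hχ⟩ | ⟨χ, M', hχ, v', hv', hw⟩
    · have : dPrime ∈ χ.map Sum.inl := hχ ▸ by simp
      simp at this
    · obtain ⟨rfl, hv'v⟩ := map_inl_append_dPrime_inj hw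
      rw [(List.map_injective_iff.mpr prime_injective) hv'v, hχ.right_unique hυ] at hv'
      exact hv'
  · rintro h w (hw | ⟨χ, M, hχ, v, hv, rfl⟩)
    · exact Or.inl hw
    · exact Or.inr ⟨χ, M, hχ, v, h χ M hχ hv, rfl⟩

theorem spliceLang_eq_spliceLang_iff {M0 : P → ℕ} {K₁ K₂ : (P → ℕ) → Set (List Tr)} :
    spliceLang N M0 d K₁ = spliceLang N M0 d K₂ ↔
      ∀ υ M, N.FiresSeq M0 (υ ++ [d]) M → K₁ M = K₂ M := by
  simp only [Set.Subset.antisymm_iff, spliceLang_subset_spliceLang_iff]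
  grind

variable [DecidableEq Tr] {L H : Finset Tr} {M : P → ℕ} {M'' : P ⊕ Bool → ℕ}

theorem fires_inl_init_iff {u : Tr} :
    (net N L H d).Fires (init M) (Sum.inl u) M'' ↔ ∃ M', N.Fires M u M' ∧ M'' = init M' := by
  by_cases hu : u ∈ N.transitions
  · have hfire : (net N L H d).fire (init M) (Sum.inl u) = init (N.fire M u) := by
      funext q
      rcases q with p | b
      · simp [fire, net, init, hu]
      · cases b <;> simp [fire, net, init, hu]
    rw [Fires, hfire]
    simp [Fires, Enabled, net, init, hu]
  · simp [Fires, Enabled, net, hu]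

theorem fires_dPrime_init_iff (hd : d ∈ N.transitions) :
    (net N L H d).Fires (init M) dPrime M'' ↔ ∃ M', N.Fires M d M' ∧ M'' = downgraded M' := by
  have hfire : (net N L H d).fire (init M) dPrime = downgraded (N.fire M d) := by
    funext q
    rcases q with p | b
    · simp [fire, net, init, downgraded, dPrime]
    · cases b <;> simp [fire, net, init, downgraded, dPrime]
  rw [Fires, hfire]
  simp [Fires, Enabled, net, init, dPrime, hd]

theorem not_fires_prime_init {u : Tr} : ¬ (net N L H d).Fires (init M) (prime u) M'' := by
  rintro ⟨⟨hu, hpre⟩, -⟩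
  have := hpre (Sum.inr false) (by simp [net])
  simp_all [net, init, prime]

theorem fires_prime_downgraded_iff (hLH : L ∪ H ⊆ N.transitions) {u : Tr} :
    (net N L H d).Fires (downgraded M) (prime u) M'' ↔
      u ∈ L ∪ H ∧ ∃ M', N.Fires M u M' ∧ M'' = downgraded M' := by
  by_cases hu : u ∈ L ∪ H
  · have hu' := Finset.mem_union.mp hu
    have hfire : (net N L H d).fire (downgraded M) (prime u) = downgraded (N.fire M u) := by
      funext q
      rcases q with p | b
      · simp [fire, net, downgraded, prime, hu']
      · cases b <;> simp [fire, net, downgraded, prime, hu']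
    rw [Fires, hfire]
    simp [Fires, Enabled, net, downgraded, prime, hu', hLH hu]
  · rw [Finset.mem_union, not_or] at hu
    simp [Fires, Enabled, net, prime, hu]

theorem not_fires_inl_downgraded {u : Tr} :
    ¬ (net N L H d).Fires (downgraded M) (Sum.inl u) M'' := by
  rintro ⟨⟨hu, hpre⟩, -⟩
  have := hpre (Sum.inr true) (by simp [net])
  simp_all [net, downgraded]

theorem not_fires_dPrime_downgraded : ¬ (net N L H d).Fires (downgraded M) dPrime M'' := by
  rintro ⟨⟨-, hpre⟩, -⟩
  have := hpre (Sum.inr true) (by simp [net])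
  simp_all [net, downgraded, dPrime]

theorem firesSeq_downgraded_iff (hLH : L ∪ H ⊆ N.transitions) {s : List (Tr ⊕ Tr ⊕ Unit)} :
    ∀ {M : P → ℕ} {Mf : P ⊕ Bool → ℕ},
      (net N L H d).FiresSeq (downgraded M) s Mf ↔
        ∃ ρ M', ρ.map prime = s ∧ (∀ u ∈ ρ, u ∈ L ∪ H) ∧ N.FiresSeq M ρ M' ∧
          Mf = downgraded M' := by
  induction s with
  | nil => simp [FiresSeq]
  | cons t s ih =>
    intro M Mf
    rcases t with u | u | ⟨⟨⟩⟩
    · simp [firesSeq_cons_iff, not_fires_inl_downgraded, List.map_eq_cons_iff, prime]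
    · simp only [firesSeq_cons_iff, fires_prime_downgraded_iff hLH, List.map_eq_cons_iff,
        prime_injective.eq_iff]
      constructor
      · rintro ⟨_, ⟨hu, M₁, hf, rfl⟩, hs⟩
        obtain ⟨ρ, M', rfl, hρ, hρs, rfl⟩ := ih.mp hs
        exact ⟨u :: ρ, M', ⟨u, ρ, rfl, rfl, rfl⟩, List.forall_mem_cons.mpr ⟨hu, hρ⟩,
          ⟨M₁, hf, hρs⟩, rfl⟩
      · rintro ⟨_, M', ⟨u, ρ, rfl, rfl, rfl⟩, hρ, ⟨M₁, hf, hs⟩, rfl⟩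
        rw [List.forall_mem_cons] at hρ
        exact ⟨_, ⟨hρ.1, M₁, hf, rfl⟩, ih.mpr ⟨ρ, M', rfl, hρ.2, hs, rfl⟩⟩
    · simp [firesSeq_cons_iff, not_fires_dPrime_downgraded, List.map_eq_cons_iff, prime]

theorem firesSeq_init_iff (hd : d ∈ N.transitions) (hLH : L ∪ H ⊆ N.transitions)
    {s : List (Tr ⊕ Tr ⊕ Unit)} :
    ∀ {M : P → ℕ} {Mf : P ⊕ Bool → ℕ},
      (net N L H d).FiresSeq (init M) s Mf ↔
        (∃ χ M', χ.map Sum.inl = s ∧ N.FiresSeq M χ M' ∧ Mf = init M') ∨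
        (∃ χ ρ M₁ M', χ.map Sum.inl ++ dPrime :: ρ.map prime = s ∧
          N.FiresSeq M (χ ++ [d]) M₁ ∧ (∀ u ∈ ρ, u ∈ L ∪ H) ∧ N.FiresSeq M₁ ρ M' ∧
          Mf = downgraded M') := by
  induction s with
  | nil => simp [FiresSeq]
  | cons t s ih =>
    intro M Mf
    rcases t with u | u | ⟨⟨⟩⟩
    · simp only [firesSeq_cons_iff, fires_inl_init_iff]
      constructor
      · rintro ⟨_, ⟨M₁, hf, rfl⟩, hs⟩
        rcases ih.mp hs with ⟨χ, M', rfl, hχ, rfl⟩ | ⟨χ, ρ, M₂, M', rfl, hχ, hρ, hρs, rfl⟩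
        · exact Or.inl ⟨u :: χ, M', rfl, ⟨M₁, hf, hχ⟩, rfl⟩
        · exact Or.inr ⟨u :: χ, ρ, M₂, M', rfl, ⟨M₁, hf, hχ⟩, hρ, hρs, rfl⟩
      · rintro (⟨_ | ⟨v, χ⟩, M', hχ, hs, rfl⟩ | ⟨_ | ⟨v, χ⟩, ρ, M₂, M', hχ, hs, hρ, hρs, rfl⟩)
          <;> simp only [List.map_nil, List.map_cons, List.nil_append, List.cons_append,
            List.cons.injEq, Sum.inl.injEq, reduceCtorEq, false_and, List.nil_eq,
            List.cons_ne_nil] at hχ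
        · obtain ⟨rfl, rfl⟩ := hχ
          obtain ⟨M₁, hf, hs⟩ := hs
          exact ⟨_, ⟨M₁, hf, rfl⟩, ih.mpr (Or.inl ⟨χ, M', rfl, hs, rfl⟩)⟩
        · obtain ⟨rfl, rfl⟩ := hχ
          obtain ⟨M₁, hf, hs⟩ := hs
          exact ⟨_, ⟨M₁, hf, rfl⟩, ih.mpr (Or.inr ⟨χ, ρ, M₂, M', rfl, hs, hρ, hρs, rfl⟩)⟩
    · simp [firesSeq_cons_iff, not_fires_prime_init, List.map_eq_cons_iff, List.append_eq_cons_iff]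
    · simp only [firesSeq_cons_iff, fires_dPrime_init_iff hd]
      constructor
      · rintro ⟨_, ⟨M₁, hf, rfl⟩, hs⟩
        obtain ⟨ρ, M', rfl, hρ, hρs, rfl⟩ := (firesSeq_downgraded_iff hLH).mp hs
        exact Or.inr ⟨[], ρ, M₁, M', rfl, ⟨M₁, hf, rfl⟩, hρ, hρs, rfl⟩
      · rintro (⟨_ | _, M', hχ, -⟩ | ⟨_ | _, ρ, M₁, M', hχ, hs, hρ, hρs, rfl⟩)
          <;> simp only [List.map_nil, List.map_cons, List.nil_append, List.cons_append,
            List.cons.injEq, reduceCtorEq, false_and, true_and, List.nil_eq,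
            List.cons_ne_nil] at hχ
        subst hχ
        obtain ⟨_, hf, rfl⟩ := hs
        exact ⟨_, ⟨M₁, hf, rfl⟩, (firesSeq_downgraded_iff hLH).mpr ⟨ρ, M', rfl, hρ, hρs, rfl⟩⟩

theorem filter_map_inl {χ : List Tr} (hχ : ∀ t ∈ χ, t ∈ N.transitions) :
    (χ.map Sum.inl).filter (· ∈ (net N L H d).transitions \ highCopies H) = χ.map Sum.inl := by
  simpa [List.filter_eq_self, net, highCopies] using hχ

theorem filter_splice (hLH : Disjoint L H) {χ ρ : List Tr} (hχ : ∀ t ∈ χ, t ∈ N.transitions)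
    (hρ : ∀ u ∈ ρ, u ∈ L ∪ H) :
    (χ.map Sum.inl ++ dPrime :: ρ.map prime).filter
        (· ∈ (net N L H d).transitions \ highCopies H) =
      χ.map Sum.inl ++ dPrime :: (ρ.filter (· ∈ L)).map prime := by
  rw [List.filter_append, filter_map_inl hχ, List.filter_cons_of_pos (by simp [net, highCopies]),
    List.filter_map]
  congr 3
  refine List.filter_congr fun u hu => ?_
  have := hρ u hu
  have := Finset.disjoint_left.mp hLH
  simp only [Function.comp_apply, net, highCopies]
  grind

theorem lang_restrict_highCopies {D : Finset Tr} (hd : d ∈ N.transitions)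
    (hT : N.transitions = L ∪ D ∪ H) (hLD : Disjoint L D) (hLH : Disjoint L H)
    (hDH : Disjoint D H) (M0 : P → ℕ) (X : Finset Tr) :
    ((net N L H d).restrict (highCopies X)).lang (init M0)
        ((net N L H d).transitions \ highCopies H) =
      spliceLang N M0 d (fun M => (N.restrict (X ∪ D)).lang M L) := by
  have hLHT : L ∪ H ⊆ N.transitions :=
    hT ▸ Finset.union_subset_union_left Finset.subset_union_left
  ext w
  constructor
  · rintro ⟨s, Mf, hs, rfl⟩
    obtain ⟨hs, hX⟩ := restrict_firesSeq_iff.mp hs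
    rcases (firesSeq_init_iff hd hLHT).mp hs with
      ⟨χ, M', rfl, hχ, -⟩ | ⟨χ, ρ, M₁, M', rfl, hχ, hρ, hρs, -⟩
    · exact Or.inl ⟨χ, ⟨M', hχ⟩, (filter_map_inl hχ.mem_transitions).symm⟩
    · have hρX : ∀ u ∈ ρ, u ∉ X := fun u hu huX =>
        hX (prime u) (by simp [hu]) (by simp [highCopies, huX])
      have hρ' : (N.restrict (X ∪ D)).FiresSeq M₁ ρ M' :=
        (restrict_union_firesSeq_iff hT hLD hDH).mpr
          ⟨hρs, fun u hu => ⟨hρ u hu, hρX u hu⟩⟩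
      refine Or.inr ⟨χ, M₁, hχ, ρ.filter (· ∈ L), ⟨ρ, M', hρ', rfl⟩, ?_⟩
      exact (filter_splice hLH (fun t ht => hχ.mem_transitions t (by simp [ht])) hρ).symm
  · rintro (⟨χ, ⟨M', hχ⟩, rfl⟩ | ⟨χ, M₁, hχ, v, ⟨ρ, M', hρs, rfl⟩, rfl⟩)
    · have hs := (firesSeq_init_iff hd hLHT).mpr (Or.inl ⟨χ, M', rfl, hχ, rfl⟩)
      refine ⟨χ.map Sum.inl, init M', restrict_firesSeq_iff.mpr ⟨hs, ?_⟩,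
        filter_map_inl hχ.mem_transitions⟩
      simp [highCopies]
    · obtain ⟨hρs, hρ⟩ := (restrict_union_firesSeq_iff hT hLD hDH).mp hρs
      have hρLH : ∀ u ∈ ρ, u ∈ L ∪ H := fun u hu => (hρ u hu).1
      have hs := (firesSeq_init_iff hd hLHT).mpr
        (Or.inr ⟨χ, ρ, M₁, M', rfl, hχ, hρLH, hρs, rfl⟩)
      refine ⟨_, downgraded M', restrict_firesSeq_iff.mpr ⟨hs, ?_⟩,
        filter_splice hLH (fun t ht => hχ.mem_transitions t (by simp [ht])) hρLH⟩
      simp only [List.mem_append, List.mem_map, List.mem_cons, highCopies, Finset.mem_image]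
      grind

end Gadget16

/-- `(N\D, M)` and `(N\(H∪D), M)` are language equivalent
(observable transitions `L`) for every `M` with `M0[υd⟩M` in `N`, iff
`N_d` and `N_d \ H'` are language equivalent (all transitions observable
except those in `H' = {t' | t ∈ H}`). -/
theorem lang_eq_iff_gadget
    {P Tr : Type _} [DecidableEq P] [DecidableEq Tr]
    (N : PTNet P Tr) (M0 : P → ℕ) (L D H : Finset Tr)
    (hT : N.transitions = L ∪ D ∪ H)
    (hLD : Disjoint L D) (hLH : Disjoint L H) (hDH : Disjoint D H)
    (d : Tr) (hd : d ∈ D) :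
    (∀ (υ : List Tr) (M : P → ℕ), N.FiresSeq M0 (υ ++ [d]) M →
        (N.restrict D).lang M L = (N.restrict (H ∪ D)).lang M L) ↔
      (Gadget16.net N L H d).lang (Gadget16.init M0)
          ((Gadget16.net N L H d).transitions \ Gadget16.highCopies H) =
        ((Gadget16.net N L H d).restrict (Gadget16.highCopies H)).lang
          (Gadget16.init M0)
          ((Gadget16.net N L H d).transitions \ Gadget16.highCopies H) := by
  have hdT : d ∈ N.transitions := hT ▸ Finset.mem_union_left _ (Finset.mem_union_right _ hd)
  have hlang := Gadget16.lang_restrict_highCopies hdT hT hLD hLH hDH M0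
  have hnet := hlang ∅
  rw [Gadget16.highCopies_empty, PTNet.restrict_empty, Finset.empty_union] at hnet
  rw [hnet, hlang H, Gadget16.spliceLang_eq_spliceLang_iff]
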